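/- Let integers m, ℓ satisfy m ≥ 5 and 1 ≤ ℓ ≤ m, and let α ∈ (0, π/2) satisfy sin²α = (ℓ(ℓ+m−2) + 2m−8)/(2ℓ(ℓ+m−2)). Then for every x ∈ ℝ^m∖{0} the map q = (sin α · u, cos α) satisfies the pointwise identities |∇q(x)|² = (ℓ(ℓ+m−2) + 2m−8)/(2|x|²) and ⟨Δ²q(x), q(x)⟩ = (ℓ+2)(ℓ+m−4)(ℓ(ℓ+m−2) + 2m−8)/(2|x|⁴). -/

import Mathlib

/-!
Away from the origin `q = sin α • ι ∘ u + const`, where `ι` is the isometric inclusion of `ℝ^N` into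
`ℝ^(N+1)` as the first `N` coordinates, so every derivative of `q` is `sin α • ι` of the
corresponding derivative of `u`; in particular `|∇q|² = sin²α |∇u|²`.

For `Δ²u`, write `Δu = -c |x|⁻² u` with `c = ℓ(ℓ+m-2)` and use the Leibniz rule
`Δ(g u) = (Δg) u + 2 Σ ∂ᵢg ∂ᵢu + g Δu`. Since `∂ᵢ|x|⁻² = -2 xᵢ |x|⁻⁴`, the middle term is a multiple
of `Σ xᵢ ∂ᵢu`, which vanishes by Euler's relation for the degree-zero map `u`; together with
`Δ|x|⁻² = -2(m-4)|x|⁻⁴` this gives `Δ²u = c(c + 2(m-4)) |x|⁻⁴ u`. Pairing with `q` and using `|u| = 1`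
leaves `sin²α · c(c + 2m - 8)/|x|⁴`, and the choice of `α` together with
`c + 2m - 8 = (ℓ+2)(ℓ+m-4)` yields both identities.
-/

open MeasureTheory Metric Real RealInnerProductSpace

noncomputable section

abbrev E (m : ℕ) : Type := EuclideanSpace ℝ (Fin m)

/-- The `i`-th partial derivative of a map between Euclidean spaces. -/
def pd {m N : ℕ} (f : E m → E N) (i : Fin m) (x : E m) : E N :=
  fderiv ℝ f x (EuclideanSpace.single i 1)

/-- The componentwise Euclidean Laplacian `Δf = Σ_i ∂_i² f`. -/
def lap {m N : ℕ} (f : E m → E N) (x : E m) : E N :=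
  ∑ i : Fin m, pd (fun y => pd f i y) i x

/-- `|∇f|² = Σ_i |∂_i f|²`. -/
def gradSq {m N : ℕ} (f : E m → E N) (x : E m) : ℝ :=
  ∑ i : Fin m, ‖pd f i x‖ ^ 2

/-- `⟨∇f, ∇g⟩ = Σ_i ⟨∂_i f, ∂_i g⟩`. -/
def gradInner {m N : ℕ} (f g : E m → E N) (x : E m) : ℝ :=
  ∑ i : Fin m, ⟪pd f i x, pd g i x⟫

/-- The deformed generalized equator map `q = (sin α · u, cos α)`. -/
def qmap {m N : ℕ} (α : ℝ) (u : E m → E N) (x : E m) : E (N + 1) :=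
  WithLp.toLp 2 (fun i : Fin (N + 1) => if h : (i : ℕ) < N then Real.sin α * u x ⟨i, h⟩ else Real.cos α)

/-- The Hessian quadratic form of the bienergy at `q`, evaluated on `η`. -/
def Qform {m N : ℕ} (q η : E m → E N) : ℝ :=
  ∫ x in ball (0 : E m) 1,
    (‖lap η x‖ ^ 2 + 2 * (gradSq q x) ^ 2 * ‖η x‖ ^ 2
      - ⟪lap (lap q) x, q x⟫ * ‖η x‖ ^ 2
      - 2 * gradSq q x * gradSq η x - 4 * (gradInner q η x) ^ 2)

/-- Admissible test fields: smooth, compactly supported in the unit ball,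
pointwise orthogonal to `q` on `B^m ∖ {0}`. -/
def Admissible {m N : ℕ} (q η : E m → E N) : Prop :=
  ContDiff ℝ (⊤ : ℕ∞) η ∧ tsupport η ⊆ ball (0 : E m) 1 ∧
    ∀ x ∈ ball (0 : E m) 1 \ {(0 : E m)}, ⟪η x, q x⟫ = 0


open scoped ContDiff
open Filter Topology

def pdScalar {m : ℕ} (g : E m → ℝ) (i : Fin m) (x : E m) : ℝ :=
  fderiv ℝ g x (EuclideanSpace.single i 1)

def lapScalar {m : ℕ} (g : E m → ℝ) (x : E m) : ℝ :=
  ∑ i : Fin m, pdScalar (pdScalar g i) i x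

section PartialDerivatives

variable {m N K : ℕ} {f : E m → E N} {g : E m → ℝ} {x : E m} {n : WithTop ℕ∞}

theorem ContDiffAt.pd (hf : ContDiffAt ℝ (n + 1) f x) (i : Fin m) :
    ContDiffAt ℝ n (pd f i) x :=
  (hf.fderiv_right le_rfl).clm_apply contDiffAt_const

theorem ContDiffAt.pdScalar (hg : ContDiffAt ℝ (n + 1) g x) (i : Fin m) :
    ContDiffAt ℝ n (pdScalar g i) x :=
  (hg.fderiv_right le_rfl).clm_apply contDiffAt_const

theorem ContDiffOn.lap {U : Set (E m)} (hf : ContDiffOn ℝ ∞ f U) (hU : IsOpen U) :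
    ContDiffOn ℝ ∞ (lap f) U := by
  have hpd (F : E m → E N) (hF : ContDiffOn ℝ ∞ F U) (i : Fin m) : ContDiffOn ℝ ∞ (pd F i) U :=
    (hF.fderiv_of_isOpen hU le_rfl).clm_apply contDiffOn_const
  exact ContDiffOn.sum fun i _ => hpd _ (hpd f hf i) i

theorem ContDiffAt.eventually_differentiableAt {F : Type*} [NormedAddCommGroup F]
    [NormedSpace ℝ F] {h : E m → F} (hh : ContDiffAt ℝ 2 h x) :
    ∀ᶠ y in 𝓝 x, DifferentiableAt ℝ h y :=
  (hh.eventually (by simp)).mono fun _ hy => hy.differentiableAt (by norm_num)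

theorem pd_congr_nhds {F G : E m → E N} (h : F =ᶠ[𝓝 x] G) (i : Fin m) :
    pd F i x = pd G i x := by
  rw [pd, pd, h.fderiv_eq]

theorem lap_congr_nhds {F G : E m → E N} (h : F =ᶠ[𝓝 x] G) : lap F x = lap G x := by
  refine Finset.sum_congr rfl fun i _ => pd_congr_nhds ?_ i
  exact h.eventuallyEq_nhds.mono fun y hy => pd_congr_nhds hy i

theorem pd_add_const (w : E N) (i : Fin m) : pd (fun y => f y + w) i = pd f i := by
  funext y
  rw [pd, pd, fderiv_add_const]

theorem lap_add_const (w : E N) : lap (fun y => f y + w) = lap f := by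
  funext y
  simp only [lap, pd_add_const]

theorem pd_clm_comp (L : E N →L[ℝ] E K) (hf : DifferentiableAt ℝ f x) (i : Fin m) :
    pd (fun y => L (f y)) i x = L (pd f i x) := by
  change fderiv ℝ (L ∘ f) x _ = _
  rw [(L.hasFDerivAt.comp x hf.hasFDerivAt).fderiv]
  rfl

theorem lap_clm_comp (L : E N →L[ℝ] E K) (hf : ContDiffAt ℝ 2 f x) :
    lap (fun y => L (f y)) x = L (lap f x) := by
  have hpd (i : Fin m) : pd (fun y => L (f y)) i =ᶠ[𝓝 x] fun y => L (pd f i y) :=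
    hf.eventually_differentiableAt.mono fun y hy => pd_clm_comp L hy i
  have hpd_diff (i : Fin m) : DifferentiableAt ℝ (pd f i) x :=
    (hf.pd (n := 1) i).differentiableAt one_ne_zero
  simp only [lap, map_sum, ← pd_clm_comp L (hpd_diff _)]
  exact Finset.sum_congr rfl fun i _ => pd_congr_nhds (hpd i) i

theorem lap_const_smul (a : ℝ) (hf : ContDiffAt ℝ 2 f x) :
    lap (fun y => a • f y) x = a • lap f x :=
  lap_clm_comp (a • ContinuousLinearMap.id ℝ (E N)) hf

theorem pd_smul (hg : DifferentiableAt ℝ g x) (hf : DifferentiableAt ℝ f x) (i : Fin m) :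
    pd (fun y => g y • f y) i x = pdScalar g i x • f x + g x • pd f i x := by
  rw [pd, fderiv_fun_smul hg hf]
  simp only [add_apply, smul_apply, ContinuousLinearMap.smulRight_apply, pdScalar, pd]
  exact add_comm _ _

theorem pd_add {F G : E m → E N} (hF : DifferentiableAt ℝ F x) (hG : DifferentiableAt ℝ G x)
    (i : Fin m) : pd (fun y => F y + G y) i x = pd F i x + pd G i x := by
  rw [pd, fderiv_fun_add hF hG]
  rfl

theorem lap_smul (hg : ContDiffAt ℝ 2 g x) (hf : ContDiffAt ℝ 2 f x) :
    lap (fun y => g y • f y) x =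
      lapScalar g x • f x + (2 : ℝ) • ∑ i, pdScalar g i x • pd f i x + g x • lap f x := by
  have hg1 := hg.differentiableAt (by norm_num)
  have hf1 := hf.differentiableAt (by norm_num)
  have hdg (i : Fin m) := (hg.pdScalar (n := 1) i).differentiableAt one_ne_zero
  have hdf (i : Fin m) := (hf.pd (n := 1) i).differentiableAt one_ne_zero
  have hpd (i : Fin m) : pd (fun y => g y • f y) i =ᶠ[𝓝 x]
      fun y => pdScalar g i y • f y + g y • pd f i y := by
    filter_upwards [hg.eventually_differentiableAt, hf.eventually_differentiableAt]
      with y hgy hfy using pd_smul hgy hfy i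
  have hpd2 (i : Fin m) : pd (pd (fun y => g y • f y) i) i x =
      pdScalar (pdScalar g i) i x • f x + pdScalar g i x • pd f i x +
        (pdScalar g i x • pd f i x + g x • pd (pd f i) i x) := by
    rw [pd_congr_nhds (hpd i), pd_add ((hdg i).fun_smul hf1) (hg1.fun_smul (hdf i)),
      pd_smul (hdg i) hf1, pd_smul hg1 (hdf i)]
  simp only [lap, lapScalar, hpd2, Finset.sum_add_distrib, ← Finset.sum_smul, ← Finset.smul_sum]
  module

end PartialDerivatives

theorem fderiv_apply_self_eq_zero_of_homogeneous {V F : Type*} [NormedAddCommGroup V]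
    [NormedSpace ℝ V] [NormedAddCommGroup F] [NormedSpace ℝ F] {u : V → F}
    (hu : ∀ c : ℝ, 0 < c → ∀ x, u (c • x) = u x) {x : V} (hx : DifferentiableAt ℝ u x) :
    fderiv ℝ u x x = 0 := by
  have hray : HasDerivAt (fun t : ℝ => u (t • x)) (fderiv ℝ u x x) 1 := by
    have := hx.hasFDerivAt.comp_hasDerivAt_of_eq 1 ((hasDerivAt_id (1 : ℝ)).smul_const x)
      (one_smul ℝ x).symm
    simpa [Function.comp_def] using this
  have hconst : (fun t : ℝ => u (t • x)) =ᶠ[𝓝 1] fun _ => u x :=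
    (lt_mem_nhds one_pos).mono fun t ht => hu t ht x
  exact hray.unique ((hasDerivAt_const (1 : ℝ) (u x)).congr_of_eventuallyEq hconst)

theorem sum_coord_smul_pd {m N : ℕ} (u : E m → E N) (x : E m) :
    ∑ i, x i • pd u i x = fderiv ℝ u x x := by
  have hx : ∑ i, x i • EuclideanSpace.single i (1 : ℝ) = x := by
    simpa using (EuclideanSpace.basisFun (Fin m) ℝ).sum_repr x
  simp only [pd, ← map_smul, ← map_sum, hx]

section NormSqPow

theorem hasFDerivAt_normSq_zpow {V : Type*} [NormedAddCommGroup V] [InnerProductSpace ℝ V]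
    (k : ℤ) {x : V} (hx : x ≠ 0) :
    HasFDerivAt (fun y => (‖y‖ ^ 2) ^ k) ((2 * k * (‖x‖ ^ 2) ^ (k - 1)) • innerSL ℝ x) x := by
  have hr : ‖x‖ ^ 2 ≠ 0 := by positivity
  refine ((hasDerivAt_zpow k _ (Or.inl hr)).comp_hasFDerivAt x
    (hasStrictFDerivAt_norm_sq x).hasFDerivAt).congr_fderiv ?_
  ext v
  simp only [smul_apply, innerSL_apply_apply, smul_eq_mul, nsmul_eq_mul]
  push_cast
  ring

variable {m : ℕ} {x : E m}

theorem pdScalar_normSq_zpow (k : ℤ) (hx : x ≠ 0) (i : Fin m) :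
    pdScalar (fun y => (‖y‖ ^ 2) ^ k) i x = 2 * k * (‖x‖ ^ 2) ^ (k - 1) * x i := by
  simp [pdScalar, (hasFDerivAt_normSq_zpow k hx).fderiv, EuclideanSpace.inner_single_right]

theorem lapScalar_normSq_zpow (k : ℤ) (hx : x ≠ 0) :
    lapScalar (fun y => (‖y‖ ^ 2) ^ k) x =
      2 * k * (2 * k + m - 2) * (‖x‖ ^ 2) ^ (k - 1) := by
  have hr : ‖x‖ ^ 2 ≠ 0 := by positivity
  have hpd (i : Fin m) : pdScalar (fun y => (‖y‖ ^ 2) ^ k) i =ᶠ[𝓝 x]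
      fun y => 2 * k * (‖y‖ ^ 2) ^ (k - 1) * y i :=
    (eventually_ne_nhds hx).mono fun y hy => pdScalar_normSq_zpow k hy i
  have hpd2 (i : Fin m) : pdScalar (pdScalar (fun y => (‖y‖ ^ 2) ^ k) i) i x =
      2 * k * (2 * (k - 1) * (‖x‖ ^ 2) ^ (k - 1 - 1) * x i ^ 2 + (‖x‖ ^ 2) ^ (k - 1)) := by
    have hcoord : HasFDerivAt (fun y : E m => y i) (EuclideanSpace.proj i : E m →L[ℝ] ℝ) x :=
      (EuclideanSpace.proj i : E m →L[ℝ] ℝ).hasFDerivAt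
    rw [pdScalar, (hpd i).fderiv_eq,
      (((hasFDerivAt_normSq_zpow (k - 1) hx).const_mul (2 * k)).fun_mul hcoord).fderiv]
    simp only [Int.cast_sub, Int.cast_one, add_apply, smul_apply, PiLp.proj_apply,
      PiLp.single_eq_same, smul_eq_mul, mul_one, coe_innerSL_apply,
      EuclideanSpace.inner_single_right, ringHom_apply, one_mul]
    ring
  rw [lapScalar, Finset.sum_congr rfl fun i _ => hpd2 i, ← Finset.mul_sum, Finset.sum_add_distrib,
    ← Finset.mul_sum, ← EuclideanSpace.real_norm_sq_eq, zpow_sub_one₀ hr (k - 1)]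
  simp only [Finset.sum_const, Finset.card_univ, Fintype.card_fin, nsmul_eq_mul]
  field_simp
  ring

end NormSqPow

theorem lap_lap_eq_of_lap_eq_smul {m N : ℕ} {u : E m → E N} (c : ℝ)
    (hu : ContDiffOn ℝ ∞ u {(0 : E m)}ᶜ) (hhom : ∀ c : ℝ, 0 < c → ∀ x : E m, u (c • x) = u x)
    (hlap : ∀ y : E m, y ≠ 0 → lap u y = (-c / ‖y‖ ^ 2) • u y) {x : E m} (hx : x ≠ 0) :
    lap (lap u) x = (c * (c + 2 * ((m : ℝ) - 4)) / ‖x‖ ^ 4) • u x := by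
  have hr : ‖x‖ ^ 2 ≠ 0 := by positivity
  have hux : ContDiffAt ℝ 2 u x :=
    (hu.contDiffAt (isOpen_compl_singleton.mem_nhds hx)).of_le (by norm_cast)
  have hg : ContDiffAt ℝ 2 (fun y : E m => (‖y‖ ^ 2) ^ (-1 : ℤ)) x := by
    simpa only [zpow_neg_one] using (contDiff_norm_sq ℝ).contDiffAt.fun_inv hr
  have hlap_near : lap u =ᶠ[𝓝 x] fun y => (-c) • ((‖y‖ ^ 2) ^ (-1 : ℤ) • u y) :=
    (eventually_ne_nhds hx).mono fun y hy => by
      simp only [hlap y hy, smul_smul, zpow_neg_one, div_eq_mul_inv]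
  have heuler : ∑ i, pdScalar (fun y : E m => (‖y‖ ^ 2) ^ (-1 : ℤ)) i x • pd u i x = 0 := by
    simp only [pdScalar_normSq_zpow (-1) hx, mul_smul, ← Finset.smul_sum, sum_coord_smul_pd,
      fderiv_apply_self_eq_zero_of_homogeneous hhom (hux.differentiableAt two_ne_zero), smul_zero]
  rw [lap_congr_nhds hlap_near, lap_const_smul _ (hg.fun_smul hux), lap_smul hg hux, heuler,
    lapScalar_normSq_zpow (-1) hx, hlap x hx, smul_zero, add_zero, smul_smul, ← add_smul, smul_smul,
    show (-1 : ℤ) - 1 = -2 by norm_num, zpow_neg, zpow_ofNat]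
  congr 1
  field_simp
  ring

def incl (N : ℕ) : E N →ₗᵢ[ℝ] E (N + 1) where
  toFun v := WithLp.toLp 2 fun i : Fin (N + 1) => if h : (i : ℕ) < N then v ⟨i, h⟩ else 0
  map_add' v w := by
    ext j
    by_cases h : (j : ℕ) < N <;> simp [h]
  map_smul' a v := by
    ext j
    by_cases h : (j : ℕ) < N <;> simp [h]
  norm_map' v := by
    simp [EuclideanSpace.norm_eq, Fin.sum_univ_castSucc]

theorem inner_incl_single_last {N : ℕ} (v : E N) :
    ⟪incl N v, EuclideanSpace.single (Fin.last N) 1⟫ = 0 := by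
  simp [incl, EuclideanSpace.inner_single_right]

section Qmap

variable {m N : ℕ} (α : ℝ) {u : E m → E N} {x : E m}

theorem qmap_eq (u : E m → E N) :
    qmap α u = fun y => (Real.sin α • (incl N).toContinuousLinearMap) (u y) +
      Real.cos α • EuclideanSpace.single (Fin.last N) 1 := by
  funext y
  ext j
  induction j using Fin.lastCases <;> simp [qmap, incl]

theorem pd_qmap (hu : DifferentiableAt ℝ u x) (i : Fin m) :
    pd (qmap α u) i x = Real.sin α • incl N (pd u i x) := by
  rw [qmap_eq, pd_add_const, pd_clm_comp _ hu]
  rfl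

theorem gradSq_qmap (hu : DifferentiableAt ℝ u x) :
    gradSq (qmap α u) x = Real.sin α ^ 2 * gradSq u x := by
  simp only [gradSq, pd_qmap α hu, norm_smul, LinearIsometry.norm_map, mul_pow, Real.norm_eq_abs,
    sq_abs, Finset.mul_sum]

theorem lap_lap_qmap {U : Set (E m)} (hU : IsOpen U) (hu : ContDiffOn ℝ ∞ u U) (hx : x ∈ U) :
    lap (lap (qmap α u)) x = Real.sin α • incl N (lap (lap u) x) := by
  set L := Real.sin α • (incl N).toContinuousLinearMap
  have hlap : lap (qmap α u) =ᶠ[𝓝 x] fun y => L (lap u y) :=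
    eventually_of_mem (hU.mem_nhds hx) fun y hy => by
      rw [qmap_eq, lap_add_const, lap_clm_comp L ((hu.contDiffAt (hU.mem_nhds hy)).of_le
        (by norm_cast))]
  rw [lap_congr_nhds hlap,
    lap_clm_comp L (((hu.lap hU).contDiffAt (hU.mem_nhds hx)).of_le (by norm_cast))]
  rfl

theorem inner_smul_incl_qmap (v : E N) :
    ⟪Real.sin α • incl N v, qmap α u x⟫ = Real.sin α ^ 2 * ⟪v, u x⟫ := by
  simp only [qmap_eq, smul_apply, LinearIsometry.coe_toContinuousLinearMap, inner_add_right,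
    real_inner_smul_right, real_inner_smul_left, LinearIsometry.inner_map_map,
    inner_incl_single_last, mul_zero, add_zero]
  ring

end Qmap

theorem q_pointwise_identities_general
    (m ℓ N : ℕ) (hm : 5 ≤ m) (hℓ1 : 1 ≤ ℓ)
    (u : E m → E N)
    (hu_smooth : ContDiffOn ℝ (⊤ : ℕ∞) u {(0 : E m)}ᶜ)
    (hu_unit : ∀ x : E m, x ≠ 0 → ‖u x‖ = 1)
    (hu_hom : ∀ c : ℝ, 0 < c → ∀ x : E m, u (c • x) = u x)
    (hu_lap : ∀ x : E m, x ≠ 0 →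
      lap u x = (-((ℓ : ℝ) * ((ℓ : ℝ) + (m : ℝ) - 2)) / ‖x‖ ^ 2) • u x)
    (hu_grad : ∀ x : E m, x ≠ 0 →
      gradSq u x = (ℓ : ℝ) * ((ℓ : ℝ) + (m : ℝ) - 2) / ‖x‖ ^ 2)
    (α : ℝ)
    (hsin : Real.sin α ^ 2 =
      ((ℓ : ℝ) * ((ℓ : ℝ) + (m : ℝ) - 2) + 2 * (m : ℝ) - 8) /
        (2 * (ℓ : ℝ) * ((ℓ : ℝ) + (m : ℝ) - 2))) :
    ∀ x : E m, x ≠ 0 →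
      gradSq (qmap α u) x =
        ((ℓ : ℝ) * ((ℓ : ℝ) + (m : ℝ) - 2) + 2 * (m : ℝ) - 8) / (2 * ‖x‖ ^ 2) ∧
      ⟪lap (lap (qmap α u)) x, qmap α u x⟫ =
        ((ℓ : ℝ) + 2) * ((ℓ : ℝ) + (m : ℝ) - 4) *
          ((ℓ : ℝ) * ((ℓ : ℝ) + (m : ℝ) - 2) + 2 * (m : ℝ) - 8) / (2 * ‖x‖ ^ 4) := by
  intro x hx
  have hℓ : (1 : ℝ) ≤ ℓ := by exact_mod_cast hℓ1
  have hm' : (5 : ℝ) ≤ m := by exact_mod_cast hm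
  have hℓm2 : (ℓ : ℝ) + m - 2 ≠ 0 := by linarith
  have hℓ0 : (ℓ : ℝ) ≠ 0 := by linarith
  have hux : DifferentiableAt ℝ u x :=
    (hu_smooth.differentiableOn (by simp)).differentiableAt (isOpen_compl_singleton.mem_nhds hx)
  constructor
  · rw [gradSq_qmap α hux, hu_grad x hx, hsin]
    field_simp
  · rw [lap_lap_qmap α isOpen_compl_singleton hu_smooth hx,
      lap_lap_eq_of_lap_eq_smul _ hu_smooth hu_hom hu_lap hx, inner_smul_incl_qmap,
      real_inner_smul_left, real_inner_self_eq_norm_sq, hu_unit x hx, hsin]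
    field_simp
    ring

/-- Pointwise identities for q = (sin α · u, cos α):
|∇q|² = (ℓ(ℓ+m−2)+2m−8)/(2|x|²) and ⟨Δ²q, q⟩ = (ℓ+2)(ℓ+m−4)(ℓ(ℓ+m−2)+2m−8)/(2|x|⁴). -/
theorem q_pointwise_identities
    (m ℓ N : ℕ) (hm : 5 ≤ m) (hℓ1 : 1 ≤ ℓ) (hℓm : ℓ ≤ m)
    (u : E m → E N)
    (hu_smooth : ContDiffOn ℝ (⊤ : ℕ∞) u {(0 : E m)}ᶜ)
    (hu_unit : ∀ x : E m, x ≠ 0 → ‖u x‖ = 1)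
    (hu_hom : ∀ c : ℝ, 0 < c → ∀ x : E m, u (c • x) = u x)
    (hu_lap : ∀ x : E m, x ≠ 0 →
      lap u x = (-((ℓ : ℝ) * ((ℓ : ℝ) + (m : ℝ) - 2)) / ‖x‖ ^ 2) • u x)
    (hu_grad : ∀ x : E m, x ≠ 0 →
      gradSq u x = (ℓ : ℝ) * ((ℓ : ℝ) + (m : ℝ) - 2) / ‖x‖ ^ 2)
    (α : ℝ) (hα : α ∈ Set.Ioo 0 (π / 2))
    (hsin : Real.sin α ^ 2 =
      ((ℓ : ℝ) * ((ℓ : ℝ) + (m : ℝ) - 2) + 2 * (m : ℝ) - 8) /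
        (2 * (ℓ : ℝ) * ((ℓ : ℝ) + (m : ℝ) - 2))) :
    ∀ x : E m, x ≠ 0 →
      gradSq (qmap α u) x =
        ((ℓ : ℝ) * ((ℓ : ℝ) + (m : ℝ) - 2) + 2 * (m : ℝ) - 8) / (2 * ‖x‖ ^ 2) ∧
      ⟪lap (lap (qmap α u)) x, qmap α u x⟫ =
        ((ℓ : ℝ) + 2) * ((ℓ : ℝ) + (m : ℝ) - 4) *
          ((ℓ : ℝ) * ((ℓ : ℝ) + (m : ℝ) - 2) + 2 * (m : ℝ) - 8) / (2 * ‖x‖ ^ 4) :=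
  q_pointwise_identities_general m ℓ N hm hℓ1 u hu_smooth hu_unit hu_hom hu_lap hu_grad α hsin

end
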